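/- arXiv:1706.00928 — 2 statements merged into one kernel-verified Lean document; each statement's English description precedes it below -/
import Mathlib

section
/- If G is a finite interval graph, then there exists a linear ordering of the maximal cliques of G such that for every vertex v of G, the set of maximal cliques containing v is consecutive in that ordering. -/
/-- A finite simple graph is an interval graph if each vertex can be assigned a
nonempty closed interval of the real line such that distinct vertices are adjacent
if and only if their intervals intersect. -/
def IsIntervalGraph {V : Type*} (G : SimpleGraph V) : Prop :=
  ∃ a b : V → ℝ, (∀ v, a v ≤ b v) ∧
    ∀ u v : V, u ≠ v →
      (G.Adj u v ↔ (Set.Icc (a u) (b u) ∩ Set.Icc (a v) (b v)).Nonempty)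

/-- A maximal clique: a clique not properly contained in any other clique. -/
def IsMaxClique {V : Type*} (G : SimpleGraph V) (C : Set V) : Prop :=
  G.IsClique C ∧ ∀ D : Set V, G.IsClique D → C ⊆ D → C = D

/-- There is a linear ordering of the maximal cliques of `G` such that for every
vertex `v`, the maximal cliques containing `v` appear consecutively. -/
def HasConsecutiveCliqueOrdering {V : Type*} (G : SimpleGraph V) : Prop :=
  ∃ r : {C : Set V // IsMaxClique G C} → {C : Set V // IsMaxClique G C} → Prop,
    IsLinearOrder {C : Set V // IsMaxClique G C} r ∧
    ∀ v : V, ∀ C₁ C₂ C₃ : {C : Set V // IsMaxClique G C},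
      r C₁ C₂ → r C₂ C₃ → v ∈ C₁.1 → v ∈ C₃.1 → v ∈ C₂.1

/-!
In an interval model, the members of a clique pairwise intersect, so every left endpoint in a
clique `C` is at most every right endpoint in `C`; hence the supremum `p_C` of the left
endpoints lies in all their intervals. The vertices whose interval contains a fixed point form
a clique, so a maximal clique `C` is exactly the set of vertices whose interval contains `p_C`.
In particular `C ↦ p_C` is injective, and ordering maximal cliques by `p_C` works: the cliques containing `v`
are those with `p_C ∈ [a v, b v]`, and an interval is order-connected.
-/

open Set

section IntervalModel

variable {V : Type*} {G : SimpleGraph V} {a b : V → ℝ}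

lemma isClique_setOf_mem_Icc
    (hadj : ∀ u v : V, u ≠ v → (Icc (a u) (b u) ∩ Icc (a v) (b v)).Nonempty → G.Adj u v)
    (p : ℝ) : G.IsClique {v | p ∈ Icc (a v) (b v)} :=
  fun u hu v hv huv => hadj u v huv ⟨p, hu, hv⟩

lemma sSup_image_mem_Icc_of_isClique (hab : ∀ v, a v ≤ b v)
    (hadj : ∀ u v : V, u ≠ v → G.Adj u v → (Icc (a u) (b u) ∩ Icc (a v) (b v)).Nonempty)
    {C : Set V} (hC : G.IsClique C) {u : V} (hu : u ∈ C) :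
    sSup (a '' C) ∈ Icc (a u) (b u) := by
  have left_le_right : ∀ w ∈ C, a w ≤ b u := by
    intro w hw
    rcases eq_or_ne w u with rfl | hwu
    · exact hab w
    · obtain ⟨x, ⟨hwx, -⟩, ⟨-, hxu⟩⟩ := hadj w u hwu (hC hw hu hwu)
      exact hwx.trans hxu
  refine ⟨le_csSup ⟨b u, ?_⟩ (mem_image_of_mem a hu), csSup_le ⟨a u, mem_image_of_mem a hu⟩ ?_⟩ <;>
    simpa only [forall_mem_image, mem_upperBounds] using left_le_right

lemma IsMaxClique.eq_setOf_sSup_image_mem_Icc (hab : ∀ v, a v ≤ b v)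
    (hadj : ∀ u v : V, u ≠ v → (G.Adj u v ↔ (Icc (a u) (b u) ∩ Icc (a v) (b v)).Nonempty))
    {C : Set V} (hC : IsMaxClique G C) :
    C = {v | sSup (a '' C) ∈ Icc (a v) (b v)} :=
  hC.2 _ (isClique_setOf_mem_Icc (fun u v huv => (hadj u v huv).2) _) fun _ hu =>
    sSup_image_mem_Icc_of_isClique hab (fun u v huv => (hadj u v huv).1) hC.1 hu

end IntervalModel

theorem intervalGraph_hasConsecutiveCliqueOrdering_general {V : Type*}
    (G : SimpleGraph V) (h : IsIntervalGraph G) :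
    HasConsecutiveCliqueOrdering G := by
  obtain ⟨a, b, hab, hadj⟩ := h
  let p : {C : Set V // IsMaxClique G C} → ℝ := fun C => sSup (a '' C.1)
  have hp : ∀ C, C.1 = {v | p C ∈ Icc (a v) (b v)} :=
    fun C => C.2.eq_setOf_sSup_image_mem_Icc hab hadj
  have hp_inj : Function.Injective p :=
    fun C D hCD => Subtype.ext <| (hp C).trans (hCD ▸ (hp D).symm)
  -- `≤` on the subtype is inclusion of sets; we use the order pulled back along `p` instead.
  refine ⟨fun C D => p C ≤ p D, @instIsLinearOrderLe _ (LinearOrder.lift' p hp_inj),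
    fun v C₁ C₂ C₃ h₁₂ h₂₃ hv₁ hv₃ => ?_⟩
  have hmem : ∀ C, v ∈ C.1 ↔ p C ∈ Icc (a v) (b v) := fun C => Set.ext_iff.1 (hp C) v
  exact (hmem C₂).2 <| ordConnected_Icc.out ((hmem C₁).1 hv₁) ((hmem C₃).1 hv₃) ⟨h₁₂, h₂₃⟩

/-- Every finite interval graph has a linear ordering of its maximal cliques in
which, for every vertex, the maximal cliques containing that vertex are consecutive. -/
theorem intervalGraph_hasConsecutiveCliqueOrdering {V : Type*} [Fintype V]
    (G : SimpleGraph V) (h : IsIntervalGraph G) :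
    HasConsecutiveCliqueOrdering G :=
  intervalGraph_hasConsecutiveCliqueOrdering_general G h
end

section
/- Let G be a finite simple graph. If there exists a linear ordering of the maximal cliques of G such that for every vertex v of G the set of maximal cliques containing v is consecutive in that ordering, then G is an interval graph. -/
/-!
Place each maximal clique at its rank `p C` in the given ordering and give every vertex `v`
the interval from the least to the greatest rank of a maximal clique containing `v`. Adjacent
vertices lie in a common maximal clique, so their intervals share that clique's rank.
Conversely, if the intervals of `u` and `v` meet and `a u ≤ a v`, then the leftmost clique of
`v` sits between the leftmost and rightmost cliques of `u`, so by consecutiveness it contains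
`u` as well; hence `u` and `v` are adjacent.
-/

lemma isMaxClique_iff_maximal {V : Type*} (G : SimpleGraph V) (C : Set V) :
    IsMaxClique G C ↔ Maximal G.IsClique C :=
  and_congr_right fun _ =>
    forall₂_congr fun _ _ => ⟨fun h hCD => (h hCD).ge, fun h hCD => hCD.antisymm (h hCD)⟩

lemma exists_isMaxClique_superset {V : Type*} [Finite V] (G : SimpleGraph V) {s : Set V}
    (hs : G.IsClique s) : ∃ C, IsMaxClique G C ∧ s ⊆ C := by
  obtain ⟨C, hsC, hC⟩ := Finite.exists_le_maximal hs
  exact ⟨C, (isMaxClique_iff_maximal G C).2 hC, hsC⟩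

lemma exists_nat_rank_le_iff {α : Type*} [Finite α] (r : α → α → Prop) [IsLinearOrder α r] :
    ∃ f : α → ℕ, ∀ x y, r x y ↔ f x ≤ f y := by
  classical
  have := Fintype.ofFinite α
  refine ⟨fun x => (Finset.univ.filter (r · x)).card, fun x y => ⟨fun hxy => ?_, fun hle => ?_⟩⟩
  · exact Finset.card_le_card fun z hz => by
      simp only [Finset.mem_filter, Finset.mem_univ, true_and] at hz ⊢
      exact trans_of r hz hxy
  · by_contra hxy
    have hyx : r y x := (total_of r x y).resolve_left hxy
    have hss : Finset.univ.filter (r · y) ⊂ Finset.univ.filter (r · x) := by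
      refine Finset.ssubset_iff_of_subset (fun z hz => ?_) |>.2 ⟨x, ?_, ?_⟩
      · simp only [Finset.mem_filter, Finset.mem_univ, true_and] at hz ⊢
        exact trans_of r hz hyx
      · simpa using refl_of r x
      · simpa using hxy
    exact (Finset.card_lt_card hss).not_ge hle

lemma Finset.mem_of_inf'_le_of_le_sup' {ι β : Type*} [LinearOrder β] {s : Finset ι}
    (hs : s.Nonempty) {p : ι → β}
    (hconv : ∀ i j k, p i ≤ p j → p j ≤ p k → i ∈ s → k ∈ s → j ∈ s) {j : ι}
    (hinf : s.inf' hs p ≤ p j) (hsup : p j ≤ s.sup' hs p) : j ∈ s := by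
  obtain ⟨i, hi, hpi⟩ := s.exists_mem_eq_inf' hs p
  obtain ⟨k, hk, hpk⟩ := s.exists_mem_eq_sup' hs p
  exact hconv i j k (hpi ▸ hinf) (hpk ▸ hsup) hi hk

theorem isIntervalGraph_of_consecutive_cliques {V ι : Type*} [Finite ι] (G : SimpleGraph V)
    (K : ι → Set V) (p : ι → ℝ) (hK : ∀ i, G.IsClique (K i)) (hvert : ∀ v, ∃ i, v ∈ K i)
    (hedge : ∀ u v, G.Adj u v → ∃ i, u ∈ K i ∧ v ∈ K i)
    (hconv : ∀ v i j k, p i ≤ p j → p j ≤ p k → v ∈ K i → v ∈ K k → v ∈ K j) :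
    IsIntervalGraph G := by
  classical
  have := Fintype.ofFinite ι
  let S : V → Finset ι := fun v => Finset.univ.filter (v ∈ K ·)
  have mem_S : ∀ {v i}, i ∈ S v ↔ v ∈ K i := by simp [S]
  have hS : ∀ v, (S v).Nonempty := fun v => (hvert v).imp fun _ => mem_S.2
  let a : V → ℝ := fun v => (S v).inf' (hS v) p
  let b : V → ℝ := fun v => (S v).sup' (hS v) p
  have mem_interval : ∀ {v i}, v ∈ K i → p i ∈ Set.Icc (a v) (b v) := fun hi =>
    ⟨Finset.inf'_le _ (mem_S.2 hi), Finset.le_sup' _ (mem_S.2 hi)⟩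
  have shared : ∀ u v, a u ≤ a v → a v ≤ b u → ∃ i, u ∈ K i ∧ v ∈ K i := by
    intro u v hau hvb
    obtain ⟨j, hj, hpj⟩ := (S v).exists_mem_eq_inf' (hS v) p
    refine ⟨j, mem_S.1 ?_, mem_S.1 hj⟩
    exact (S u).mem_of_inf'_le_of_le_sup' (hS u)
      (fun i j k hij hjk hi hk => mem_S.2 (hconv u i j k hij hjk (mem_S.1 hi) (mem_S.1 hk)))
      (hpj ▸ hau) (hpj ▸ hvb)
  have hab : ∀ v, a v ≤ b v := fun v =>
    let ⟨_, hi⟩ := hvert v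
    (mem_interval hi).1.trans (mem_interval hi).2
  refine ⟨a, b, hab, fun u v huv => ⟨fun hadj => ?_, ?_⟩⟩
  · obtain ⟨i, hu, hv⟩ := hedge u v hadj
    exact ⟨p i, mem_interval hu, mem_interval hv⟩
  · rintro ⟨x, ⟨hau, hub⟩, hav, hvb⟩
    rcases le_total (a u) (a v) with hle | hle
    · obtain ⟨i, hu, hv⟩ := shared u v hle (hav.trans hub)
      exact hK i hu hv huv
    · obtain ⟨i, hv, hu⟩ := shared v u hle (hau.trans hvb)
      exact hK i hu hv huv

/-- If the maximal cliques of a finite graph admit a linear ordering in which, for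
every vertex, the cliques containing that vertex are consecutive, then the graph is
an interval graph. -/
theorem consecutiveCliqueOrdering_isIntervalGraph {V : Type*} [Fintype V]
    (G : SimpleGraph V) (h : HasConsecutiveCliqueOrdering G) :
    IsIntervalGraph G := by
  obtain ⟨r, hr, hcons⟩ := h
  obtain ⟨f, hf⟩ := exists_nat_rank_le_iff r
  refine isIntervalGraph_of_consecutive_cliques G (fun C => C.1) (fun C => (f C : ℝ))
    (fun C => C.2.1) (fun v => ?_) (fun u v huv => ?_) fun v C₁ C₂ C₃ h₁₂ h₂₃ =>
      hcons v C₁ C₂ C₃ ((hf _ _).2 (mod_cast h₁₂)) ((hf _ _).2 (mod_cast h₂₃))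
  · obtain ⟨C, hC, hvC⟩ := exists_isMaxClique_superset G (G.isClique_singleton v)
    exact ⟨⟨C, hC⟩, hvC rfl⟩
  · obtain ⟨C, hC, huvC⟩ := exists_isMaxClique_superset G (G.isClique_pair.2 fun _ => huv)
    exact ⟨⟨C, hC⟩, huvC (by simp), huvC (by simp)⟩
end
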